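/- arXiv:2310.12061 — 5 statements merged into one kernel-verified Lean document; each statement's English description precedes it below -/
import Mathlib

section
/- For any real numbers c > 0 and p_1,…,p_n with 0 < p_i < 1, setting a = Σ_{i=1}^n p_i, one has 1 − Π_{i=1}^n (1 − p_i) ≥ min{ 1 − e^{−c}, (a/c)(1 − e^{−c}) }. -/
theorem one_sub_prod_ge (n : ℕ) (c : ℝ) (hc : 0 < c) (p : Fin n → ℝ)
    (hp : ∀ i, 0 < p i ∧ p i < 1) :
    1 - ∏ i, (1 - p i) ≥
      min (1 - Real.exp (-c)) ((∑ i, p i) / c * (1 - Real.exp (-c))) := by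
  set a := ∑ i, p i with ha
  have ha0 : 0 ≤ a := Finset.sum_nonneg fun i _ => (hp i).1.le
  have hprod : ∏ i, (1 - p i) ≤ Real.exp (-a) := by
    have : Real.exp (-a) = ∏ i, Real.exp (-p i) := by
      rw [← Real.exp_sum, ha, ← Finset.sum_neg_distrib]
    rw [this]
    apply Finset.prod_le_prod
    · intro i _; linarith [(hp i).2]
    · intro i _
      have := Real.add_one_le_exp (-p i)
      linarith
  have key : 1 - Real.exp (-a) ≥
      min (1 - Real.exp (-c)) (a / c * (1 - Real.exp (-c))) := by
    rcases le_total c a with h | h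
    · refine le_trans (min_le_left _ _) ?_
      have : Real.exp (-a) ≤ Real.exp (-c) := Real.exp_le_exp.2 (by linarith)
      linarith
    · refine le_trans (min_le_right _ _) ?_
      set t := a / c with ht
      have ht0 : 0 ≤ t := div_nonneg ha0 hc.le
      have ht1 : t ≤ 1 := (div_le_one hc).2 h
      have htc : t * c = a := div_mul_cancel₀ a hc.ne'
      have hconv := convexOn_exp.2 (Set.mem_univ (0:ℝ)) (Set.mem_univ (-c))
        (by linarith : (0:ℝ) ≤ 1 - t) ht0 (by ring)
      simp only [smul_eq_mul, mul_zero, zero_add, Real.exp_zero] at hconv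
      have heq : (1 - t) * 0 + t * (-c) = -a := by rw [mul_zero, zero_add]; linarith
      rw [show (t * -c) = -a by linarith] at hconv
      nlinarith [Real.exp_pos (-c)]
  linarith [hprod, key]
end

section
/- Let C ≥ 2 be an integer and 0 < 𝕡 < 1 with 𝕡^{n+1} ≤ C^{-6} for some n ≥ 1. Suppose P_n ∈ [0,1] satisfies 1 − P_n ≤ 𝕡^{n+1}, and define P_{n+1} := P_n^C + C·P_n^{C−1}·(1−P_n). Then 1 − P_{n+1} ≤ 𝕡^{n+2}. -/
lemma multiscale_aux (x : ℝ) (hx0 : 0 ≤ x) (hx1 : x ≤ 1) (m : ℕ) :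
    1 - x ^ (m + 2) - ((m : ℝ) + 2) * x ^ (m + 1) * (1 - x) ≤ ((m : ℝ) + 2) ^ 2 * (1 - x) ^ 2 := by
  induction m with
  | zero =>
    norm_num
    nlinarith [sq_nonneg (1 - x)]
  | succ m ih =>
    have h1 : x ^ (m + 1) ≤ 1 := pow_le_one₀ hx0 hx1
    have h0 : 0 ≤ x ^ (m + 1) := pow_nonneg hx0 _
    have e2 : x ^ (m + 2) = x ^ (m + 1) * x := by ring
    have e3 : x ^ (m + 3) = x ^ (m + 1) * x ^ 2 := by ring
    rw [e2] at ih
    have goal : 1 - x ^ (m + 3) - ((m : ℝ) + 3) * x ^ (m + 2) * (1 - x)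
        ≤ ((m : ℝ) + 3) ^ 2 * (1 - x) ^ 2 := by
      rw [e2, e3]
      nlinarith [ih, sq_nonneg (1 - x), mul_nonneg h0 (sq_nonneg (1 - x)),
        mul_nonneg (mul_nonneg (by positivity : (0:ℝ) ≤ (m:ℝ) + 2)
          (by linarith : (0:ℝ) ≤ 1 - x ^ (m + 1))) (sq_nonneg (1 - x))]
    convert goal using 3 <;> push_cast <;> ring

theorem multiscale_estimate (C : ℕ) (hC : 2 ≤ C) (p : ℝ) (hp0 : 0 < p) (hp1 : p < 1)
    (n : ℕ) (hn : 1 ≤ n) (hpC : p ^ (n + 1) ≤ ((C : ℝ) ^ 6)⁻¹)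
    (P : ℝ) (hP0 : 0 ≤ P) (hP1 : P ≤ 1) (hPn : 1 - P ≤ p ^ (n + 1)) :
    1 - (P ^ C + C * P ^ (C - 1) * (1 - P)) ≤ p ^ (n + 2) := by
  obtain ⟨m, rfl⟩ : ∃ m, C = m + 2 := ⟨C - 2, by omega⟩
  have hCpos : (0:ℝ) < (m : ℝ) + 2 := by positivity
  have key := multiscale_aux P hP0 hP1 m
  have hq0 : 0 ≤ 1 - P := by linarith
  have hε : 0 < p ^ (n + 1) := pow_pos hp0 _
  -- p^n ≤ (C:ℝ)⁻¹^3
  have hpn : p ^ n ≤ ((m : ℝ) + 2)⁻¹ ^ 3 := by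
    have hinv : (0:ℝ) < ((m : ℝ) + 2)⁻¹ := by positivity
    have h1 : (p ^ n) ^ (n + 1) ≤ (((m : ℝ) + 2)⁻¹ ^ 3) ^ (n + 1) := by
      have : (p ^ n) ^ (n + 1) = (p ^ (n + 1)) ^ n := by
        rw [← pow_mul, ← pow_mul]; ring_nf
      rw [this]
      calc (p ^ (n + 1)) ^ n ≤ (((m : ℝ) + 2) ^ 6)⁻¹ ^ n := by
            apply pow_le_pow_left₀ hε.le
            simpa using hpC
        _ = ((m : ℝ) + 2)⁻¹ ^ (6 * n) := by
            rw [← inv_pow, ← pow_mul]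
        _ ≤ ((m : ℝ) + 2)⁻¹ ^ (3 * (n + 1)) := by
            apply pow_le_pow_of_le_one hinv.le
            · rw [inv_le_one_iff₀]; right; linarith
            · omega
        _ = (((m : ℝ) + 2)⁻¹ ^ 3) ^ (n + 1) := by rw [← pow_mul]
    exact le_of_pow_le_pow_left₀ (by omega) (by positivity) h1
  -- chain: C^2 * (1-P)^2 ≤ C^2 * ε^2 = C^2 * p^n * p^(n+2) ≤ p^(n+2)/C ≤ p^(n+2)
  have hq2 : (1 - P) ^ 2 ≤ (p ^ (n + 1)) ^ 2 := by
    apply pow_le_pow_left₀ hq0 hPn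
  have hεsq : (p ^ (n + 1)) ^ 2 = p ^ n * p ^ (n + 2) := by
    rw [← pow_mul, ← pow_add]; ring_nf
  have hfin : ((m : ℝ) + 2) ^ 2 * (1 - P) ^ 2 ≤ p ^ (n + 2) := by
    have h2 : ((m : ℝ) + 2) ^ 2 * (1 - P) ^ 2 ≤ ((m : ℝ) + 2) ^ 2 * (p ^ n * p ^ (n + 2)) := by
      rw [← hεsq]
      exact mul_le_mul_of_nonneg_left hq2 (by positivity)
    have h3 : ((m : ℝ) + 2) ^ 2 * p ^ n ≤ ((m : ℝ) + 2)⁻¹ := by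
      calc ((m : ℝ) + 2) ^ 2 * p ^ n ≤ ((m : ℝ) + 2) ^ 2 * ((m : ℝ) + 2)⁻¹ ^ 3 :=
            mul_le_mul_of_nonneg_left hpn (by positivity)
        _ = ((m : ℝ) + 2)⁻¹ := by field_simp
    have h4 : ((m : ℝ) + 2)⁻¹ ≤ 1 := by
      rw [inv_le_one_iff₀]; right; linarith
    have hp2 : 0 < p ^ (n + 2) := pow_pos hp0 _
    calc ((m : ℝ) + 2) ^ 2 * (1 - P) ^ 2 ≤ ((m : ℝ) + 2) ^ 2 * p ^ n * p ^ (n + 2) := by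
          linarith [h2]
      _ ≤ ((m : ℝ) + 2)⁻¹ * p ^ (n + 2) := mul_le_mul_of_nonneg_right h3 hp2.le
      _ ≤ 1 * p ^ (n + 2) := mul_le_mul_of_nonneg_right h4 hp2.le
      _ = p ^ (n + 2) := one_mul _
  have hcast : ((m + 2 : ℕ) : ℝ) = (m : ℝ) + 2 := by push_cast; ring
  have hsub : m + 2 - 1 = m + 1 := by omega
  rw [hsub, hcast]
  linarith [key, hfin]
end

section
/- For real x ∈ (0,1) and integer C ≥ 2 with (1−x)^{-1} ≥ C^6, one has 1 − x^C − C·x^{C−1}·(1−x) ≤ (1−x)^{3/2}. -/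
lemma binomial_tail_aux (x : ℝ) (h0 : 0 ≤ x) (h1 : x ≤ 1) : ∀ n : ℕ,
    1 - x ^ (n + 1) - ((n : ℝ) + 1) * x ^ n * (1 - x) ≤ ((n : ℝ) * ((n : ℝ) + 1) / 2) * (1 - x) ^ 2 := by
  intro n
  induction n with
  | zero => norm_num
  | succ n ih =>
    have hy : x ^ n ≤ 1 := pow_le_one₀ h0 h1
    have hy0 : 0 ≤ x ^ n := pow_nonneg h0 n
    have expand : 1 - x ^ (n + 1 + 1) - ((n : ℝ) + 1 + 1) * x ^ (n + 1) * (1 - x)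
        = (1 - x ^ (n + 1) - ((n : ℝ) + 1) * x ^ n * (1 - x))
          + ((n : ℝ) + 1) * x ^ n * (1 - x) ^ 2 := by ring
    have hb : ((n : ℝ) + 1) * x ^ n * (1 - x) ^ 2 ≤ ((n : ℝ) + 1) * (1 - x) ^ 2 := by
      have : ((n : ℝ) + 1) * x ^ n * (1 - x) ^ 2 ≤ ((n : ℝ) + 1) * 1 * (1 - x) ^ 2 := by
        have := mul_le_mul_of_nonneg_left hy (by positivity : (0:ℝ) ≤ (n : ℝ) + 1)
        exact mul_le_mul_of_nonneg_right this (sq_nonneg _)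
      linarith [this]
    push_cast
    rw [expand]
    nlinarith [hb, ih, sq_nonneg (1 - x)]

theorem binomial_tail_bound (x : ℝ) (hx0 : 0 < x) (hx1 : x < 1) (C : ℕ) (hC : 2 ≤ C)
    (h : (1 - x)⁻¹ ≥ (C : ℝ) ^ 6) :
    1 - x ^ C - C * x ^ (C - 1) * (1 - x) ≤ (1 - x) ^ ((3 : ℝ) / 2) := by
  set t : ℝ := 1 - x with ht
  have ht0 : 0 < t := by simp [ht]; linarith
  have hC2 : (2 : ℝ) ≤ (C : ℝ) := by exact_mod_cast hC
  have hC6 : (0:ℝ) < (C : ℝ) ^ 6 := by positivity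
  have h6 : (C : ℝ) ^ 6 * t ≤ 1 := by
    have := mul_le_mul_of_nonneg_right h ht0.le
    rwa [inv_mul_cancel₀ ht0.ne'] at this
  have ht6 : t ≤ ((C : ℝ) ^ 6)⁻¹ := by
    have h' := mul_le_mul_of_nonneg_right h6 (inv_nonneg.2 hC6.le)
    rwa [mul_comm ((C:ℝ)^6) t, mul_assoc, mul_inv_cancel₀ hC6.ne', mul_one, one_mul] at h'
  have hs : Real.sqrt t ≤ ((C : ℝ) ^ 3)⁻¹ := by
    calc Real.sqrt t ≤ Real.sqrt (((C : ℝ) ^ 6)⁻¹) := Real.sqrt_le_sqrt ht6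
    _ = ((C : ℝ) ^ 3)⁻¹ := by
        rw [show ((C : ℝ) ^ 6)⁻¹ = (((C : ℝ) ^ 3)⁻¹) ^ 2 by ring]
        exact Real.sqrt_sq (by positivity)
  have hsq : Real.sqrt t * Real.sqrt t = t := Real.mul_self_sqrt ht0.le
  have hsn : 0 ≤ Real.sqrt t := Real.sqrt_nonneg t
  have hrpow : t ^ ((3 : ℝ) / 2) = t * Real.sqrt t := by
    rw [show (3 : ℝ) / 2 = 1 + 1 / 2 by norm_num, Real.rpow_add ht0, Real.rpow_one,
      ← Real.sqrt_eq_rpow]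
  have h1 : ((C : ℝ) * (C : ℝ) / 2) * Real.sqrt t ≤ 1 := by
    have hc3 : (0:ℝ) < ((C : ℝ)) ^ 3 := by positivity
    have h3 : ((C : ℝ)) ^ 3 * Real.sqrt t ≤ 1 := by
      calc ((C : ℝ)) ^ 3 * Real.sqrt t ≤ ((C : ℝ)) ^ 3 * (((C : ℝ)) ^ 3)⁻¹ := by
            exact mul_le_mul_of_nonneg_left hs hc3.le
        _ = 1 := mul_inv_cancel₀ hc3.ne'
    nlinarith [hsn, hC2]
  obtain ⟨m, rfl⟩ : ∃ m, C = m + 1 := ⟨C - 1, (Nat.succ_pred_eq_of_pos (by omega)).symm⟩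
  have key := binomial_tail_aux x hx0.le hx1.le m
  rw [hrpow]
  have hmono : ((m : ℝ) * ((m : ℝ) + 1) / 2) ≤ ((m+1 : ℕ) : ℝ) * ((m+1 : ℕ) : ℝ) / 2 := by
    push_cast; nlinarith
  calc 1 - x ^ (m + 1) - (↑(m+1) : ℝ) * x ^ ((m+1) - 1) * (1 - x)
      ≤ ((m : ℝ) * ((m : ℝ) + 1) / 2) * t ^ 2 := by push_cast; simpa using key
    _ = (((m : ℝ) * ((m : ℝ) + 1) / 2) * Real.sqrt t) * (t * Real.sqrt t) := by
        linear_combination (-(((m : ℝ) * ((m : ℝ) + 1) / 2) * t)) * hsq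
    _ ≤ ((((m+1 : ℕ) : ℝ) * ((m+1 : ℕ) : ℝ) / 2) * Real.sqrt t) * (t * Real.sqrt t) := by
        apply mul_le_mul_of_nonneg_right (mul_le_mul_of_nonneg_right hmono hsn)
        positivity
    _ ≤ 1 * (t * Real.sqrt t) := by
        apply mul_le_mul_of_nonneg_right h1; positivity
    _ = t * Real.sqrt t := one_mul _
end

section
/- Define 𝔟(n) := ⌊(2−𝔡)^{-1} n⌋ with 𝔡 = 1/12 (so 𝔟(n) = ⌊12n/23⌋). Let m, r, q, n be positive integers with m ≥ 4, q ≥ 3, m, r > q, and m + r − ⌊q/12⌋ ∈ {n, n+1} where moreover m + r = n in case q ≤ 8. Then 𝔟(m) + 𝔟(r) − ⌈q/2⌉ ≤ 𝔟(n) − 2. -/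
def flat (n : ℤ) : ℤ := ⌊(12 * (n : ℚ)) / 23⌋

lemma flat_eq (n : ℤ) : flat n = (12 * n) / 23 := by
  unfold flat
  rw [show (12 * (n : ℚ)) / 23 = ((12 * n : ℤ) : ℚ) / ((23 : ℕ) : ℚ) by push_cast; ring]
  exact Rat.floor_intCast_div_natCast _ _

lemma floor_div12 (q : ℤ) : ⌊(q : ℚ) / 12⌋ = q / 12 := by
  rw [show (q : ℚ) / 12 = ((q : ℤ) : ℚ) / ((12 : ℕ) : ℚ) by push_cast; ring]
  exact Rat.floor_intCast_div_natCast _ _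

lemma ceil_div2 (q : ℤ) : ⌈(q : ℚ) / 2⌉ = -((-q) / 2) := by
  rw [show ⌈(q:ℚ)/2⌉ = -⌊-((q:ℚ)/2)⌋ by rw [Int.floor_neg]; ring]
  rw [show -((q : ℚ) / 2) = (((-q) : ℤ) : ℚ) / ((2 : ℕ) : ℚ) by push_cast; ring]
  rw [Rat.floor_intCast_div_natCast]; norm_num

theorem extra_estimate_one (m r q n : ℤ)
    (hm1 : 1 ≤ m) (hr1 : 1 ≤ r) (hq1 : 1 ≤ q) (hn1 : 1 ≤ n)
    (hm : 4 ≤ m) (hq : 3 ≤ q) (hmq : q < m) (hrq : q < r)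
    (hmr : m + r - ⌊(q : ℚ) / 12⌋ = n ∨ m + r - ⌊(q : ℚ) / 12⌋ = n + 1)
    (hsmall : q ≤ 8 → m + r = n) :
    flat m + flat r - ⌈(q : ℚ) / 2⌉ ≤ flat n - 2 := by
  rw [flat_eq, flat_eq, flat_eq, ceil_div2]
  rw [floor_div12] at hmr
  omega
end

section
/- With 𝔟(n) := ⌊12n/23⌋, let m, r, q, n be positive integers satisfying the hypotheses m ≥ 4, q ≥ 3, m, r > q, m + r − ⌊q/12⌋ ∈ {n, n+1} (and m + r = n if q ≤ 8), and set M := max(𝔟(m), q−1). Then M + 𝔟(r) − q ≤ 𝔟(n) − 3. -/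
theorem extra_estimate_two (m r q n : ℤ)
    (hm1 : 1 ≤ m) (hr1 : 1 ≤ r) (hq1 : 1 ≤ q) (hn1 : 1 ≤ n)
    (hm : 4 ≤ m) (hq : 3 ≤ q) (hmq : q < m) (hrq : q < r)
    (hmr : m + r - ⌊(q : ℚ) / 12⌋ = n ∨ m + r - ⌊(q : ℚ) / 12⌋ = n + 1)
    (hsmall : q ≤ 8 → m + r = n) :
    max (flat m) (q - 1) + flat r - q ≤ flat n - 3 := by
  rw [show ((12:ℚ)) = ((12:ℕ):ℚ) by norm_num, Rat.floor_intCast_div_natCast] at hmr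
  norm_num at hmr
  rcases le_total (flat m) (q-1) with h | h <;>
    [rw [max_eq_right h]; rw [max_eq_left h]] <;>
    rw [flat_eq] at h <;> simp only [flat_eq] <;> omega
end
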